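/- arXiv:2502.17106 — 11 statements merged into one kernel-verified Lean document; each statement's English description precedes it below -/
import Mathlib

section
/- For all integers m and n, the multisets {±(2m+2n), ±(−nm−n−m+3), ±(nm−n−m−3)} and {±(2n−2m), ±(nm−n+m+3), ±(−nm−n+m−3)} have equal power sums of order k for every k with 1 ≤ k ≤ 5. -/
theorem List.sum_map_pow_append_map_neg_of_odd {R : Type*} [Ring R] (l : List R) {k : ℕ}
    (hk : Odd k) : ((l ++ l.map (-·)).map (· ^ k)).sum = 0 := by
  simp [List.map_map, Function.comp_def, hk.neg_pow, ← List.sum_map_add]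

theorem List.sum_map_pow_append_map_neg_of_even {R : Type*} [Ring R] (l : List R) {k : ℕ}
    (hk : Even k) : ((l ++ l.map (-·)).map (· ^ k)).sum = 2 * (l.map (· ^ k)).sum := by
  simp [List.map_map, Function.comp_def, hk.neg_pow, two_mul]

/-- Borwein's parametric ideal solution of degree 5 of the one-dimensional PTE problem. -/
theorem borwein_pte_solution (m n : ℤ) (k : ℕ) (hk1 : 1 ≤ k) (hk5 : k ≤ 5) :
    (([2*m + 2*n, -(n*m) - n - m + 3, n*m - n - m - 3,
       -(2*m + 2*n), -(-(n*m) - n - m + 3), -(n*m - n - m - 3)] : List ℤ).map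
      (fun x => x ^ k)).sum =
    (([2*n - 2*m, n*m - n + m + 3, -(n*m) - n + m - 3,
       -(2*n - 2*m), -(n*m - n + m + 3), -(-(n*m) - n + m - 3)] : List ℤ).map
      (fun x => x ^ k)).sum := by
  let l₁ : List ℤ := [2*m + 2*n, -(n*m) - n - m + 3, n*m - n - m - 3]
  let l₂ : List ℤ := [2*n - 2*m, n*m - n + m + 3, -(n*m) - n + m - 3]
  change ((l₁ ++ l₁.map (-·)).map (· ^ k)).sum = ((l₂ ++ l₂.map (-·)).map (· ^ k)).sum
  rcases Nat.even_or_odd k with hk | hk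
  · rw [l₁.sum_map_pow_append_map_neg_of_even hk, l₂.sum_map_pow_append_map_neg_of_even hk]
    obtain rfl | rfl : k = 2 ∨ k = 4 := by obtain ⟨j, rfl⟩ := hk; omega
    all_goals simp only [l₁, l₂, List.map_cons, List.map_nil, List.sum_cons, List.sum_nil]; ring
  · rw [l₁.sum_map_pow_append_map_neg_of_odd hk, l₂.sum_map_pow_append_map_neg_of_odd hk]
end

section
/- For all integers a and b, the multisets X = {(0,0),(2a+b,b),(3a+b,3a+3b),(2a,6a+4b),(−b,6a+3b),(−a−b,3a+b)} and Y = {(2a,0),(3a+b,3a+b),(2a+b,6a+3b),(0,6a+4b),(−a−b,3a+3b),(−b,b)} in ℤ² satisfy ∑_{(x,y)∈X} x^{k₁} y^{k₂} = ∑_{(x,y)∈Y} x^{k₁} y^{k₂} for all nonnegative integers k₁, k₂ with 1 ≤ k₁+k₂ ≤ 5. -/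
theorem alpers_tijdeman_solution_general (a b : ℤ) (k₁ k₂ : ℕ)
    (h5 : k₁ + k₂ ≤ 5) :
    (([((0:ℤ),(0:ℤ)), (2*a + b, b), (3*a + b, 3*a + 3*b), (2*a, 6*a + 4*b),
       (-b, 6*a + 3*b), (-a - b, 3*a + b)] : List (ℤ × ℤ)).map
      (fun p => p.1 ^ k₁ * p.2 ^ k₂)).sum =
    (([((2*a:ℤ),(0:ℤ)), (3*a + b, 3*a + b), (2*a + b, 6*a + 3*b), (0, 6*a + 4*b),
       (-a - b, 3*a + 3*b), (-b, b)] : List (ℤ × ℤ)).map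
      (fun p => p.1 ^ k₁ * p.2 ^ k₂)).sum := by
  have hk₁ : k₁ ≤ 5 := by omega
  have hk₂ : k₂ ≤ 5 - k₁ := by omega
  interval_cases k₁ <;> interval_cases k₂ <;>
    simp only [List.map_cons, List.map_nil, List.sum_cons, List.sum_nil] <;> ring

/-- The Alpers–Tijdeman ideal solution of degree 5 of the two-dimensional PTE problem. -/
theorem alpers_tijdeman_solution (a b : ℤ) (k₁ k₂ : ℕ)
    (h1 : 1 ≤ k₁ + k₂) (h5 : k₁ + k₂ ≤ 5) :
    (([((0:ℤ),(0:ℤ)), (2*a + b, b), (3*a + b, 3*a + 3*b), (2*a, 6*a + 4*b),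
       (-b, 6*a + 3*b), (-a - b, 3*a + b)] : List (ℤ × ℤ)).map
      (fun p => p.1 ^ k₁ * p.2 ^ k₂)).sum =
    (([((2*a:ℤ),(0:ℤ)), (3*a + b, 3*a + b), (2*a + b, 6*a + 3*b), (0, 6*a + 4*b),
       (-a - b, 3*a + 3*b), (-b, b)] : List (ℤ × ℤ)).map
      (fun p => p.1 ^ k₁ * p.2 ^ k₂)).sum :=
  alpers_tijdeman_solution_general a b k₁ k₂ h5
end

section
/- For all integers m and n, the two multisets of points in ℤ², X = {±(2(n+m), −nm−n−m+3), ±(−nm−n−m+3, nm−n−m−3), ±(nm−n−m−3, 2(n+m))} and Y = {±(2(n−m), nm−n+m+3), ±(nm−n+m+3, −nm−n+m−3), ±(−nm−n+m−3, 2(n−m))}, satisfy ∑_{(x,y)∈X} x^{k₁} y^{k₂} = ∑_{(x,y)∈Y} x^{k₁} y^{k₂} for all nonnegative integers k₁, k₂ with 1 ≤ k₁+k₂ ≤ 5. -/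
/-!
Both multisets are symmetric under `p ↦ -p`, and the monomial `x ^ k₁ * y ^ k₂` is multiplied
by `(-1) ^ (k₁ + k₂)` under that map, so all power sums of odd degree vanish on both sides.
What remains are the degrees `2` and `4`, where the power sums over the three points
`(a, b), (b, c), (c, a)` of each side are polynomial identities in `m` and `n`.
-/

section PowerSums

variable {R : Type*} [CommRing R]

def monomialSum (k₁ k₂ : ℕ) (L : List (R × R)) : R :=
  (L.map fun p => p.1 ^ k₁ * p.2 ^ k₂).sum

theorem monomialSum_append_map_neg (k₁ k₂ : ℕ) (L : List (R × R)) :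
    monomialSum k₁ k₂ (L ++ L.map Neg.neg) = (1 + (-1) ^ (k₁ + k₂)) * monomialSum k₁ k₂ L := by
  induction L with
  | nil => simp [monomialSum]
  | cons p L ih =>
    have hneg : (-p).1 ^ k₁ * (-p).2 ^ k₂ = (-1) ^ (k₁ + k₂) * (p.1 ^ k₁ * p.2 ^ k₂) := by
      rw [Prod.fst_neg, Prod.snd_neg, neg_pow p.1, neg_pow p.2, pow_add]
      ring
    simp only [monomialSum, List.map_cons, List.cons_append, List.sum_cons, List.map_append,
      List.sum_append] at ih ⊢
    rw [hneg]
    linear_combination ih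

def borweinX (m n : R) : List (R × R) :=
  [(2 * (n + m), -(n * m) - n - m + 3),
   (-(n * m) - n - m + 3, n * m - n - m - 3),
   (n * m - n - m - 3, 2 * (n + m))]

def borweinY (m n : R) : List (R × R) :=
  [(2 * (n - m), n * m - n + m + 3),
   (n * m - n + m + 3, -(n * m) - n + m - 3),
   (-(n * m) - n + m - 3, 2 * (n - m))]

theorem monomialSum_borweinX_eq_borweinY (m n : R) {k₁ k₂ : ℕ}
    (hdeg : k₁ + k₂ = 2 ∨ k₁ + k₂ = 4) :
    monomialSum k₁ k₂ (borweinX m n) = monomialSum k₁ k₂ (borweinY m n) := by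
  have hk₁ : k₁ ≤ 4 := by omega
  have hk₂ : k₂ ≤ 4 := by omega
  simp only [monomialSum, borweinX, borweinY, List.map_cons, List.map_nil, List.sum_cons,
    List.sum_nil]
  interval_cases k₁ <;> interval_cases k₂ <;> first | (exfalso; omega) | ring

end PowerSums

/-- The two-dimensional Borwein solution of the two-dimensional PTE problem. -/
theorem two_dim_borwein_solution (m n : ℤ) (k₁ k₂ : ℕ)
    (h1 : 1 ≤ k₁ + k₂) (h5 : k₁ + k₂ ≤ 5) :
    (([(2*(n + m), -(n*m) - n - m + 3),
       (-(n*m) - n - m + 3, n*m - n - m - 3),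
       (n*m - n - m - 3, 2*(n + m)),
       (-(2*(n + m)), -(-(n*m) - n - m + 3)),
       (-(-(n*m) - n - m + 3), -(n*m - n - m - 3)),
       (-(n*m - n - m - 3), -(2*(n + m)))] : List (ℤ × ℤ)).map
      (fun p => p.1 ^ k₁ * p.2 ^ k₂)).sum =
    (([(2*(n - m), n*m - n + m + 3),
       (n*m - n + m + 3, -(n*m) - n + m - 3),
       (-(n*m) - n + m - 3, 2*(n - m)),
       (-(2*(n - m)), -(n*m - n + m + 3)),
       (-(n*m - n + m + 3), -(-(n*m) - n + m - 3)),
       (-(-(n*m) - n + m - 3), -(2*(n - m)))] : List (ℤ × ℤ)).map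
      (fun p => p.1 ^ k₁ * p.2 ^ k₂)).sum := by
  change monomialSum k₁ k₂ (borweinX m n ++ (borweinX m n).map Neg.neg) =
    monomialSum k₁ k₂ (borweinY m n ++ (borweinY m n).map Neg.neg)
  rw [monomialSum_append_map_neg, monomialSum_append_map_neg]
  rcases Nat.even_or_odd (k₁ + k₂) with heven | hodd
  · obtain ⟨r, hr⟩ := heven
    rw [monomialSum_borweinX_eq_borweinY m n (by omega)]
  · rw [hodd.neg_one_pow]
    ring
end

section
/- For all rational numbers t₁ and t₂, the two multisets of 6 points in ℚ², X(t₁) and X(t₂), where X(t) = {±((2t+1)/(t²+t+1), (t²−1)/(t²+t+1)), ±((t²−1)/(t²+t+1), −t(t+2)/(t²+t+1)), ±(−t(t+2)/(t²+t+1), (2t+1)/(t²+t+1))}, satisfy ∑_{(x,y)∈X(t₁)} x^{k₁} y^{k₂} = ∑_{(x,y)∈X(t₂)} x^{k₁} y^{k₂} for all nonnegative integers k₁, k₂ with 1 ≤ k₁+k₂ ≤ 5. -/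
/-!
Write `a, b, c` for the three coordinates, so that the six points are `±(a, b), ±(b, c), ±(c, a)`.
For every `t` we have `a + b + c = 0` and `ab + bc + ca = -1`. By central symmetry the odd moments
vanish, and once `c = -a - b` every even moment of degree at most `4` is a fixed multiple of a power of
`ab + bc + ca`: the hexagon is an orbit of a linear group of order `6`, whose invariants of degree
below `6` are the powers of the quadratic form `a² + ab + b²`.
-/

section Hexagon

variable {R : Type*} [CommRing R]

def mixedMoment (k₁ k₂ : ℕ) (X : List (R × R)) : R :=
  (X.map fun p => p.1 ^ k₁ * p.2 ^ k₂).sum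

def hexagon (a b c : R) : List (R × R) :=
  [(a, b), (b, c), (c, a), (-a, -b), (-b, -c), (-c, -a)]

def cyclicMoment (k₁ k₂ : ℕ) (a b c : R) : R :=
  a ^ k₁ * b ^ k₂ + b ^ k₁ * c ^ k₂ + c ^ k₁ * a ^ k₂

theorem mixedMoment_hexagon (k₁ k₂ : ℕ) (a b c : R) :
    mixedMoment k₁ k₂ (hexagon a b c) = (1 + (-1) ^ (k₁ + k₂)) * cyclicMoment k₁ k₂ a b c := by
  simp only [mixedMoment, hexagon, cyclicMoment, List.map_cons, List.map_nil, List.sum_cons,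
    List.sum_nil, neg_pow a, neg_pow b, neg_pow c]
  ring

theorem cyclicMoment_congr {k₁ k₂ : ℕ} (heven : Even (k₁ + k₂)) (hk : k₁ + k₂ ≤ 4)
    {a b c a' b' c' : R} (h : a + b + c = 0) (h' : a' + b' + c' = 0)
    (he : a * b + b * c + c * a = a' * b' + b' * c' + c' * a') :
    cyclicMoment k₁ k₂ a b c = cyclicMoment k₁ k₂ a' b' c' := by
  obtain rfl : c = -a - b := by linear_combination h
  obtain rfl : c' = -a' - b' := by linear_combination h'
  have hk₁ : k₁ ≤ 4 := by omega
  have hk₂ : k₂ ≤ 4 := by omega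
  interval_cases k₁ <;> interval_cases k₂ <;> grind [cyclicMoment]

theorem mixedMoment_hexagon_congr {k₁ k₂ : ℕ} (hk : k₁ + k₂ ≤ 5)
    {a b c a' b' c' : R} (h : a + b + c = 0) (h' : a' + b' + c' = 0)
    (he : a * b + b * c + c * a = a' * b' + b' * c' + c' * a') :
    mixedMoment k₁ k₂ (hexagon a b c) = mixedMoment k₁ k₂ (hexagon a' b' c') := by
  rw [mixedMoment_hexagon, mixedMoment_hexagon]
  rcases Nat.even_or_odd (k₁ + k₂) with heven | hodd
  · rw [cyclicMoment_congr heven (by grind) h h' he]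
  · simp [hodd.neg_one_pow]

end Hexagon

section RationalParametrization

variable {K : Type*} [Field K]

theorem rational_hexagon_sum_eq_zero (t : K) :
    (2*t + 1)/(t^2 + t + 1) + (t^2 - 1)/(t^2 + t + 1) + -(t*(t + 2))/(t^2 + t + 1) = 0 := by
  ring

theorem rational_hexagon_esymm_two {t : K} (hD : t^2 + t + 1 ≠ 0) :
    (2*t + 1)/(t^2 + t + 1) * ((t^2 - 1)/(t^2 + t + 1))
      + (t^2 - 1)/(t^2 + t + 1) * (-(t*(t + 2))/(t^2 + t + 1))
      + -(t*(t + 2))/(t^2 + t + 1) * ((2*t + 1)/(t^2 + t + 1)) = -1 := by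
  simp only [div_mul_div_comm, ← add_div]
  rw [div_eq_iff (mul_ne_zero hD hD)]
  ring

end RationalParametrization

theorem rational_two_dim_pte_solution_general (t₁ t₂ : ℚ) (k₁ k₂ : ℕ)
    (h5 : k₁ + k₂ ≤ 5) :
    (((fun t : ℚ =>
        ([((2*t + 1)/(t^2 + t + 1), (t^2 - 1)/(t^2 + t + 1)),
          ((t^2 - 1)/(t^2 + t + 1), -(t*(t + 2))/(t^2 + t + 1)),
          (-(t*(t + 2))/(t^2 + t + 1), (2*t + 1)/(t^2 + t + 1)),
          (-((2*t + 1)/(t^2 + t + 1)), -((t^2 - 1)/(t^2 + t + 1))),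
          (-((t^2 - 1)/(t^2 + t + 1)), -(-(t*(t + 2))/(t^2 + t + 1))),
          (-(-(t*(t + 2))/(t^2 + t + 1)), -((2*t + 1)/(t^2 + t + 1)))] :
         List (ℚ × ℚ))) t₁).map
      (fun p => p.1 ^ k₁ * p.2 ^ k₂)).sum =
    (((fun t : ℚ =>
        ([((2*t + 1)/(t^2 + t + 1), (t^2 - 1)/(t^2 + t + 1)),
          ((t^2 - 1)/(t^2 + t + 1), -(t*(t + 2))/(t^2 + t + 1)),
          (-(t*(t + 2))/(t^2 + t + 1), (2*t + 1)/(t^2 + t + 1)),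
          (-((2*t + 1)/(t^2 + t + 1)), -((t^2 - 1)/(t^2 + t + 1))),
          (-((t^2 - 1)/(t^2 + t + 1)), -(-(t*(t + 2))/(t^2 + t + 1))),
          (-(-(t*(t + 2))/(t^2 + t + 1)), -((2*t + 1)/(t^2 + t + 1)))] :
         List (ℚ × ℚ))) t₂).map
      (fun p => p.1 ^ k₁ * p.2 ^ k₂)).sum := by
  have hD (t : ℚ) : t^2 + t + 1 ≠ 0 := by nlinarith [sq_nonneg (2*t + 1)]
  -- both sides unfold to `mixedMoment k₁ k₂ (hexagon a b c)` for the parametrised `a, b, c`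
  exact mixedMoment_hexagon_congr h5 (rational_hexagon_sum_eq_zero t₁)
    (rational_hexagon_sum_eq_zero t₂)
    (by rw [rational_hexagon_esymm_two (hD t₁), rational_hexagon_esymm_two (hD t₂)])

/-- A parametric rational ideal solution of degree 5 of the two-dimensional PTE problem. -/
theorem rational_two_dim_pte_solution (t₁ t₂ : ℚ) (k₁ k₂ : ℕ)
    (h1 : 1 ≤ k₁ + k₂) (h5 : k₁ + k₂ ≤ 5) :
    (((fun t : ℚ =>
        ([((2*t + 1)/(t^2 + t + 1), (t^2 - 1)/(t^2 + t + 1)),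
          ((t^2 - 1)/(t^2 + t + 1), -(t*(t + 2))/(t^2 + t + 1)),
          (-(t*(t + 2))/(t^2 + t + 1), (2*t + 1)/(t^2 + t + 1)),
          (-((2*t + 1)/(t^2 + t + 1)), -((t^2 - 1)/(t^2 + t + 1))),
          (-((t^2 - 1)/(t^2 + t + 1)), -(-(t*(t + 2))/(t^2 + t + 1))),
          (-(-(t*(t + 2))/(t^2 + t + 1)), -((2*t + 1)/(t^2 + t + 1)))] :
         List (ℚ × ℚ))) t₁).map
      (fun p => p.1 ^ k₁ * p.2 ^ k₂)).sum =
    (((fun t : ℚ =>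
        ([((2*t + 1)/(t^2 + t + 1), (t^2 - 1)/(t^2 + t + 1)),
          ((t^2 - 1)/(t^2 + t + 1), -(t*(t + 2))/(t^2 + t + 1)),
          (-(t*(t + 2))/(t^2 + t + 1), (2*t + 1)/(t^2 + t + 1)),
          (-((2*t + 1)/(t^2 + t + 1)), -((t^2 - 1)/(t^2 + t + 1))),
          (-((t^2 - 1)/(t^2 + t + 1)), -(-(t*(t + 2))/(t^2 + t + 1))),
          (-(-(t*(t + 2))/(t^2 + t + 1)), -((2*t + 1)/(t^2 + t + 1)))] :
         List (ℚ × ℚ))) t₂).map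
      (fun p => p.1 ^ k₁ * p.2 ^ k₂)).sum :=
  rational_two_dim_pte_solution_general t₁ t₂ k₁ k₂ h5
end

section
/- For all rational numbers t₁ and t₂, the multisets {±(2t₁+1)/(t₁²+t₁+1), ±(t₁²−1)/(t₁²+t₁+1), ±t₁(t₁+2)/(t₁²+t₁+1)} and {±(2t₂+1)/(t₂²+t₂+1), ±(t₂²−1)/(t₂²+t₂+1), ±t₂(t₂+2)/(t₂²+t₂+1)} have equal k-th power sums for every k with 1 ≤ k ≤ 5. -/
/-!
Write `a = (2t+1)/D`, `b = (t²-1)/D`, `c = t(t+2)/D` with `D = t² + t + 1`. Then `c = a + b` and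
`a² + ab + b² = 1`, so `(a, b)` runs over a conic. For any `a, b` with `c = a + b`, the odd power
sums of `{±a, ±b, ±c}` vanish, and the even ones up to degree 4 are `4q` and `4q²` with
`q = a² + ab + b²`. On the conic they are therefore independent of the parameter.
-/

section PowerSums

variable {R : Type*} [CommRing R]

theorem sum_map_pow_pm_eq_ite_even {a b c : R} (hc : c = a + b) (hq : a ^ 2 + a * b + b ^ 2 = 1)
    {k : ℕ} (hk1 : 1 ≤ k) (hk5 : k ≤ 5) :
    ([a, b, c, -a, -b, -c].map (· ^ k)).sum = if Even k then 4 else 0 := by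
  subst hc
  interval_cases k <;> simp only [List.map_cons, List.map_nil, List.sum_cons, List.sum_nil]
    <;> norm_num
  · ring
  · linear_combination 4 * hq
  · ring
  · linear_combination 4 * (a ^ 2 + a * b + b ^ 2 + 1) * hq
  · ring

end PowerSums

section Parametrization

variable {K : Type*} [Field K] {t : K}

theorem div_add_div_eq_pte_param (t : K) :
    (2 * t + 1) / (t ^ 2 + t + 1) + (t ^ 2 - 1) / (t ^ 2 + t + 1) = t * (t + 2) / (t ^ 2 + t + 1) := by
  rw [← add_div]
  ring

theorem pte_param_sq_add_mul_add_sq (hD : t ^ 2 + t + 1 ≠ 0) :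
    ((2 * t + 1) / (t ^ 2 + t + 1)) ^ 2 + (2 * t + 1) / (t ^ 2 + t + 1) * ((t ^ 2 - 1) / (t ^ 2 + t + 1))
      + ((t ^ 2 - 1) / (t ^ 2 + t + 1)) ^ 2 = 1 := by
  have hnorm : (2 * t + 1) ^ 2 + (2 * t + 1) * (t ^ 2 - 1) + (t ^ 2 - 1) ^ 2 = (t ^ 2 + t + 1) ^ 2 := by
    ring
  rw [div_pow, div_pow, div_mul_div_comm, ← sq, ← add_div, ← add_div, hnorm,
    div_self (pow_ne_zero 2 hD)]

theorem sq_add_self_add_one_ne_zero {F : Type*} [Field F] [LinearOrder F] [IsStrictOrderedRing F]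
    (t : F) : t ^ 2 + t + 1 ≠ 0 := by
  nlinarith [sq_nonneg (2 * t + 1)]

end Parametrization

/-- A parametric rational ideal solution of degree 5 of the one-dimensional PTE problem. -/
theorem rational_pte_solution (t₁ t₂ : ℚ) (k : ℕ) (hk1 : 1 ≤ k) (hk5 : k ≤ 5) :
    (([(2*t₁ + 1)/(t₁^2 + t₁ + 1), (t₁^2 - 1)/(t₁^2 + t₁ + 1),
       t₁*(t₁ + 2)/(t₁^2 + t₁ + 1),
       -((2*t₁ + 1)/(t₁^2 + t₁ + 1)), -((t₁^2 - 1)/(t₁^2 + t₁ + 1)),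
       -(t₁*(t₁ + 2)/(t₁^2 + t₁ + 1))] : List ℚ).map
      (fun x => x ^ k)).sum =
    (([(2*t₂ + 1)/(t₂^2 + t₂ + 1), (t₂^2 - 1)/(t₂^2 + t₂ + 1),
       t₂*(t₂ + 2)/(t₂^2 + t₂ + 1),
       -((2*t₂ + 1)/(t₂^2 + t₂ + 1)), -((t₂^2 - 1)/(t₂^2 + t₂ + 1)),
       -(t₂*(t₂ + 2)/(t₂^2 + t₂ + 1))] : List ℚ).map
      (fun x => x ^ k)).sum := by
  have hsum (t : ℚ) := sum_map_pow_pm_eq_ite_even (div_add_div_eq_pte_param t).symm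
    (pte_param_sq_add_mul_add_sq (sq_add_self_add_one_ne_zero t)) hk1 hk5
  rw [hsum t₁, hsum t₂]
end

section
/- For all integers (or rationals) m, n, the multisets {±(−5m²+4mn−3n²), ±(−3m²+6mn+5n²), ±(−m²−10mn−n²)} and {±(−5m²+6mn+3n²), ±(−3m²−4mn−5n²), ±(−m²+10mn−n²)} have equal k-th power sums for every k with 1 ≤ k ≤ 5. -/
/-!
Both multisets have the shape `l ∪ -l` for a triple `l`, so their odd power sums vanish and
their even power sums are twice those of the triples. It therefore suffices that the two triples
have equal sums of squares and equal sums of fourth powers, which are polynomial identities in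
`m, n`.
-/

section

variable {R : Type*} [CommRing R]

theorem sum_map_neg_pow (l : List R) (k : ℕ) :
    (l.map fun x => (-x) ^ k).sum = (-1) ^ k * (l.map (· ^ k)).sum := by
  rw [← List.sum_map_mul_left]
  exact congrArg List.sum (List.map_congr_left fun x _ => neg_pow x k)

theorem sum_map_pow_append_map_neg (l : List R) (k : ℕ) :
    ((l ++ l.map Neg.neg).map (· ^ k)).sum = (1 + (-1) ^ k) * (l.map (· ^ k)).sum := by
  rw [List.map_append, List.sum_append, List.map_map, Function.comp_def, sum_map_neg_pow]
  ring

theorem sum_map_pow_append_map_neg_eq {l₁ l₂ : List R} {k : ℕ}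
    (h : Even k → (l₁.map (· ^ k)).sum = (l₂.map (· ^ k)).sum) :
    ((l₁ ++ l₁.map Neg.neg).map (· ^ k)).sum = ((l₂ ++ l₂.map Neg.neg).map (· ^ k)).sum := by
  rw [sum_map_pow_append_map_neg, sum_map_pow_append_map_neg]
  rcases k.even_or_odd with hk | hk
  · rw [h hk]
  · simp only [hk.neg_one_pow, add_neg_cancel, zero_mul]

def chernickLeft (m n : R) : List R :=
  [-5*m^2 + 4*m*n - 3*n^2, -3*m^2 + 6*m*n + 5*n^2, -m^2 - 10*m*n - n^2]

def chernickRight (m n : R) : List R :=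
  [-5*m^2 + 6*m*n + 3*n^2, -3*m^2 - 4*m*n - 5*n^2, -m^2 + 10*m*n - n^2]

theorem chernick_sum_sq (m n : R) :
    ((chernickLeft m n).map (· ^ 2)).sum = ((chernickRight m n).map (· ^ 2)).sum := by
  simp only [chernickLeft, chernickRight, List.map_cons, List.map_nil, List.sum_cons,
    List.sum_nil]
  ring

theorem chernick_sum_pow_four (m n : R) :
    ((chernickLeft m n).map (· ^ 4)).sum = ((chernickRight m n).map (· ^ 4)).sum := by
  simp only [chernickLeft, chernickRight, List.map_cons, List.map_nil, List.sum_cons,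
    List.sum_nil]
  ring

theorem chernick_sum_pow_of_even (m n : R) {k : ℕ} (hk : k ≤ 5) (he : Even k) :
    ((chernickLeft m n).map (· ^ k)).sum = ((chernickRight m n).map (· ^ k)).sum := by
  obtain ⟨j, rfl⟩ := he
  have hj : j ≤ 2 := by omega
  interval_cases j
  · simp only [Nat.add_zero, pow_zero, chernickLeft, chernickRight, List.map_cons, List.map_nil]
  · exact chernick_sum_sq m n
  · exact chernick_sum_pow_four m n

end

theorem chernick_pte_solution_general (m n : ℤ) (k : ℕ) (hk5 : k ≤ 5) :
    (([-5*m^2 + 4*m*n - 3*n^2, -3*m^2 + 6*m*n + 5*n^2, -m^2 - 10*m*n - n^2,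
       -(-5*m^2 + 4*m*n - 3*n^2), -(-3*m^2 + 6*m*n + 5*n^2),
       -(-m^2 - 10*m*n - n^2)] : List ℤ).map (fun x => x ^ k)).sum =
    (([-5*m^2 + 6*m*n + 3*n^2, -3*m^2 - 4*m*n - 5*n^2, -m^2 + 10*m*n - n^2,
       -(-5*m^2 + 6*m*n + 3*n^2), -(-3*m^2 - 4*m*n - 5*n^2),
       -(-m^2 + 10*m*n - n^2)] : List ℤ).map (fun x => x ^ k)).sum :=
  sum_map_pow_append_map_neg_eq (l₁ := chernickLeft m n) (l₂ := chernickRight m n)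
    (chernick_sum_pow_of_even m n hk5)

/-- Chernick's parametric ideal solution of degree 5 of the one-dimensional PTE problem. -/
theorem chernick_pte_solution (m n : ℤ) (k : ℕ) (hk1 : 1 ≤ k) (hk5 : k ≤ 5) :
    (([-5*m^2 + 4*m*n - 3*n^2, -3*m^2 + 6*m*n + 5*n^2, -m^2 - 10*m*n - n^2,
       -(-5*m^2 + 4*m*n - 3*n^2), -(-3*m^2 + 6*m*n + 5*n^2),
       -(-m^2 - 10*m*n - n^2)] : List ℤ).map (fun x => x ^ k)).sum =
    (([-5*m^2 + 6*m*n + 3*n^2, -3*m^2 - 4*m*n - 5*n^2, -m^2 + 10*m*n - n^2,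
       -(-5*m^2 + 6*m*n + 3*n^2), -(-3*m^2 - 4*m*n - 5*n^2),
       -(-m^2 + 10*m*n - n^2)] : List ℤ).map (fun x => x ^ k)).sum :=
  chernick_pte_solution_general m n k hk5
end

section
/- The curve C : y² = 14(5x²+2x+1)(x²−2x+5) has no points with both coordinates in ℚ. -/
/-!
Writing `x = p / q` in lowest terms and clearing denominators, a rational point gives an integer
square `14 · F(p, q) · F(q, -p)`, where `F(a, b) = 5a² + 2ab + b²`. The discriminant `-16` of `F` is
not a square mod 7, so `F` has no nontrivial zero mod 7 and `7 ∤ F(p, q) · F(q, -p)`. The integer is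
then divisible by 7 exactly once, which no square is.
-/

theorem Prime.not_isSquare_mul_of_not_dvd {α : Type*} [CommMonoidWithZero α]
    [IsCancelMulZero α] {p m : α} (hp : Prime p) (hm : ¬p ∣ m) : ¬IsSquare (p * m) := by
  rintro ⟨z, hz⟩
  obtain ⟨w, rfl⟩ : p ∣ z := hp.dvd_of_dvd_pow (n := 2) ⟨m, by rw [sq, ← hz]⟩
  refine hm ⟨w * w, mul_left_cancel₀ hp.ne_zero ?_⟩
  rw [hz]
  ac_rfl

/-- Homogenizes `5x² + 2x + 1`; `curveForm b (-a)` homogenizes `x² - 2x + 5`. -/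
def curveForm {R : Type*} [CommRing R] (a b : R) : R := 5 * a ^ 2 + 2 * a * b + b ^ 2

@[simp, norm_cast]
lemma Int.cast_curveForm {R : Type*} [CommRing R] (a b : ℤ) :
    ((curveForm a b : ℤ) : R) = curveForm (a : R) b := by
  simp [curveForm]

lemma eq_zero_of_curveForm_eq_zero_zmod_seven :
    ∀ a b : ZMod 7, curveForm a b = 0 → a = 0 ∧ b = 0 := by
  unfold curveForm
  decide

lemma seven_not_dvd_curveForm {a b : ℤ} (hab : IsCoprime a b) : ¬7 ∣ curveForm a b := by
  intro hdvd
  have hzero : curveForm (a : ZMod 7) b = 0 := by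
    rw [← Int.cast_curveForm, (ZMod.intCast_zmod_eq_zero_iff_dvd _ 7).mpr hdvd]
  obtain ⟨ha, hb⟩ := eq_zero_of_curveForm_eq_zero_zmod_seven _ _ hzero
  have hcop := hab.map (Int.castRingHom (ZMod 7))
  rw [eq_intCast, eq_intCast, ha, hb, isCoprime_zero_left] at hcop
  have : Fact (1 < 7) := ⟨by norm_num⟩
  exact not_isUnit_zero hcop

lemma den_pow_four_mul_curve_rhs (x : ℚ) :
    (x.den : ℚ) ^ 4 * (14 * (5 * x ^ 2 + 2 * x + 1) * (x ^ 2 - 2 * x + 5)) =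
      ((7 * (2 * curveForm x.num (x.den : ℤ) * curveForm (x.den : ℤ) (-x.num)) : ℤ) : ℚ) := by
  have hx : x * x.den = x.num := Rat.mul_den_eq_num x
  push_cast [curveForm]
  rw [← hx]
  ring

/-- The curve `y² = 14(5x²+2x+1)(x²−2x+5)` has no rational points. -/
theorem no_rational_points_on_curve (x y : ℚ) :
    y ^ 2 ≠ 14 * (5*x^2 + 2*x + 1) * (x^2 - 2*x + 5) := by
  intro h
  have hcop : IsCoprime x.num x.den := Int.isCoprime_iff_gcd_eq_one.mpr x.reduced
  have hsq : IsSquare (7 * (2 * curveForm x.num (x.den : ℤ) * curveForm (x.den : ℤ) (-x.num))) :=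
    Rat.isSquare_intCast_iff.mp
      ⟨y * x.den ^ 2, by rw [← den_pow_four_mul_curve_rhs, ← h]; ring⟩
  have h7 : Prime (7 : ℤ) := by norm_num
  refine h7.not_isSquare_mul_of_not_dvd ?_ hsq
  simp only [h7.dvd_mul, not_or]
  exact ⟨⟨by norm_num, seven_not_dvd_curveForm hcop⟩,
    seven_not_dvd_curveForm hcop.symm.neg_right⟩
end

section
/- There is no rational number A with 14·A²·(5m²+2mn+n²)(m²−2mn+5n²) = 4 for any rationals m, n not both zero. -/
/-!
The product `(5m²+2mn+n²)(m²−2mn+5n²) = ((m+n)² + (2m)²)((m−n)² + (2n)²)` is, by the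
Brahmagupta identity, a sum of two rational squares, so the equation would write `14` as a sum of
two rational squares. Clearing denominators gives `14d² = a² + b²` in `ℕ` with `d ≠ 0`. But a
sum of two squares contains every prime `≡ 3 (mod 4)` to an even power, while `7` divides `14d²`
to an odd power.
-/

theorem Rat.exists_int_sq_add_sq_eq_mul_sq {x y r : ℚ} (h : x ^ 2 + y ^ 2 = r) :
    ∃ a b : ℤ, ∃ d : ℕ, d ≠ 0 ∧ (a : ℚ) ^ 2 + b ^ 2 = r * d ^ 2 := by
  refine ⟨x.num * y.den, y.num * x.den, x.den * y.den, by positivity, ?_⟩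
  rw [← h]
  push_cast
  rw [← Rat.mul_den_eq_num x, ← Rat.mul_den_eq_num y]
  ring

theorem Rat.sq_add_sq_ne_natCast_of_odd_padicValNat {n q : ℕ} [Fact q.Prime] (hq : q % 4 = 3)
    (hodd : Odd (padicValNat q n)) (x y : ℚ) : x ^ 2 + y ^ 2 ≠ n := by
  intro h
  obtain ⟨a, b, d, hd, hab⟩ := Rat.exists_int_sq_add_sq_eq_mul_sq h
  have hn : n ≠ 0 := by rintro rfl; simp at hodd
  have hsum : n * d ^ 2 = a.natAbs ^ 2 + b.natAbs ^ 2 := by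
    zify; simp only [sq_abs]; exact_mod_cast hab.symm
  have hmem : q ∈ (n * d ^ 2).primeFactors :=
    Nat.mem_primeFactors.mpr ⟨Fact.out, (dvd_of_one_le_padicValNat hodd.pos).mul_right _,
      by positivity⟩
  have heven := Nat.eq_sq_add_sq_iff.mp ⟨_, _, hsum⟩ q hmem hq
  rw [padicValNat.mul hn (by positivity), padicValNat.pow] at heven
  exact Nat.not_even_iff_odd.mpr hodd (by simpa [Nat.even_add, Nat.even_mul] using heven)

theorem padicValNat_seven_fourteen : padicValNat 7 14 = 1 := by
  have : Fact (Nat.Prime 7) := ⟨by norm_num⟩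
  rw [show 14 = 7 * 2 from rfl, padicValNat.mul (by norm_num) (by norm_num), padicValNat_self,
    padicValNat.eq_zero_of_not_dvd (by norm_num)]

theorem no_rational_scaling_general (A m n : ℚ) :
    14 * A^2 * (5*m^2 + 2*m*n + n^2) * (m^2 - 2*m*n + 5*n^2) ≠ 4 := by
  intro h
  have hsum : (7 * A * (m^2 - 4*m*n - n^2)) ^ 2 + (7 * A * (2 * (m^2 + n^2))) ^ 2 = (14 : ℕ) := by
    push_cast
    linear_combination (7 / 2 : ℚ) * h
  have : Fact (Nat.Prime 7) := ⟨by norm_num⟩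
  exact Rat.sq_add_sq_ne_natCast_of_odd_padicValNat (q := 7) (by norm_num)
    (by rw [padicValNat_seven_fourteen]; decide) _ _ hsum

/-- There is no rational `A` with `14A²(5m²+2mn+n²)(m²−2mn+5n²) = 4`
for rationals `m`, `n` not both zero. -/
theorem no_rational_scaling (A m n : ℚ) (hmn : m ≠ 0 ∨ n ≠ 0) :
    14 * A^2 * (5*m^2 + 2*m*n + n^2) * (m^2 - 2*m*n + 5*n^2) ≠ 4 :=
  no_rational_scaling_general A m n
end

section
/- If a disjoint pair of multisets {a₁,…,a_m} and {b₁,…,b_m} of integers satisfies ∑ a_i^k = ∑ b_i^k for all 1 ≤ k ≤ n, then m ≥ n+1. -/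
/-!
By Newton's identities, in a domain of characteristic zero the first `m` power sums of a multiset
of size `m` determine its elementary symmetric functions, hence the polynomial `∏ (X - a)`, hence
the multiset itself. So if `m ≤ n`, the two multisets are equal, and a nonempty multiset is not
disjoint from itself.
-/

open Polynomial

namespace Multiset

variable {R : Type*} [CommRing R]

/-- Newton's identities for the elements of a multiset. -/
theorem mul_esymm_eq_sum (A : Multiset R) (k : ℕ) :
    k * A.esymm k = (-1) ^ (k + 1) *
      ∑ a ∈ Finset.HasAntidiagonal.antidiagonal k with a.1 < k,
        (-1) ^ a.1 * A.esymm a.1 * (A.map (· ^ a.2)).sum := by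
  set f := A.toList.get
  have hA : Finset.univ.val.map f = A := by
    rw [Fin.univ_val_map, List.ofFn_get, coe_toList]
  have hesymm (j : ℕ) :
      MvPolynomial.aeval f (MvPolynomial.esymm (Fin A.toList.length) R j) = A.esymm j := by
    rw [MvPolynomial.aeval_esymm_eq_multiset_esymm, hA]
  have hpsum (j : ℕ) :
      MvPolynomial.aeval f (MvPolynomial.psum (Fin A.toList.length) R j) = (A.map (· ^ j)).sum := by
    simp only [MvPolynomial.psum, map_sum, map_pow, MvPolynomial.aeval_X, ← hA, map_map]
    rfl
  simpa only [map_mul, map_sum, map_pow, map_neg, map_one, map_natCast, hesymm, hpsum] using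
    congrArg (MvPolynomial.aeval f) (MvPolynomial.mul_esymm_eq_sum (Fin A.toList.length) R k)

theorem esymm_eq_of_sum_map_pow_eq [IsAddTorsionFree R] {A B : Multiset R} {m : ℕ}
    (hp : ∀ k, 1 ≤ k → k ≤ m → (A.map (· ^ k)).sum = (B.map (· ^ k)).sum) :
    ∀ k ≤ m, A.esymm k = B.esymm k := by
  intro k
  induction k using Nat.strong_induction_on with
  | _ k ih =>
  intro hkm
  rcases Nat.eq_zero_or_pos k with rfl | hk
  · simp [esymm]
  have hsum : ∑ a ∈ Finset.HasAntidiagonal.antidiagonal k with a.1 < k,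
        (-1) ^ a.1 * A.esymm a.1 * (A.map (· ^ a.2)).sum =
      ∑ a ∈ Finset.HasAntidiagonal.antidiagonal k with a.1 < k,
        (-1) ^ a.1 * B.esymm a.1 * (B.map (· ^ a.2)).sum := by
    refine Finset.sum_congr rfl fun a ha => ?_
    rw [Finset.mem_filter, Finset.HasAntidiagonal.mem_antidiagonal] at ha
    rw [ih a.1 ha.2 (by omega), hp a.2 (by omega) (by omega)]
  have hk_mul : k • A.esymm k = k • B.esymm k := by
    rw [nsmul_eq_mul, nsmul_eq_mul, mul_esymm_eq_sum, mul_esymm_eq_sum, hsum]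
  exact nsmul_right_injective hk.ne' hk_mul

theorem eq_of_card_eq_of_sum_map_pow_eq [IsDomain R] [CharZero R] {A B : Multiset R}
    (hcard : card A = card B)
    (hp : ∀ k, 1 ≤ k → k ≤ card A → (A.map (· ^ k)).sum = (B.map (· ^ k)).sum) :
    A = B := by
  have hesymm := esymm_eq_of_sum_map_pow_eq hp
  have hprod : (A.map (X - C ·)).prod = (B.map (X - C ·)).prod := by
    rw [prod_X_sub_X_eq_sum_esymm, prod_X_sub_X_eq_sum_esymm, ← hcard]
    refine Finset.sum_congr rfl fun j hj => ?_
    rw [hesymm j (Nat.lt_succ_iff.mp (Finset.mem_range.mp hj))]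
  simpa only [roots_multiset_prod_X_sub_C] using congrArg roots hprod

end Multiset

/-- The classical size bound for the one-dimensional PTE problem of degree `n`:
a disjoint pair of `m`-element multisets of integers with equal `k`-th power sums
for all `1 ≤ k ≤ n` satisfies `m ≥ n + 1`. -/
theorem pte_size_bound (n m : ℕ) (hm : 0 < m) (s t : Multiset ℤ)
    (hs : Multiset.card s = m) (ht : Multiset.card t = m)
    (hdisj : Disjoint s t)
    (hpow : ∀ k : ℕ, 1 ≤ k → k ≤ n →
      (s.map (fun a => a ^ k)).sum = (t.map (fun a => a ^ k)).sum) :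
    m ≥ n + 1 := by
  by_contra! hmn
  have hst : s = t := Multiset.eq_of_card_eq_of_sum_map_pow_eq (hs.trans ht.symm)
    fun k hk hks => hpow k hk (by omega)
  subst hst
  have hs0 : s = 0 := disjoint_self.mp hdisj
  rw [hs0, Multiset.card_zero] at hs
  omega
end

section
/- If θ is a rational multiple of 2π and sin θ ∈ ℚ, then sin θ ∈ {0, 1, −1, 1/2, −1/2}; likewise for cos θ. -/
namespace NivenTheorem

/-- Niven's theorem: if `θ` is a rational multiple of `2π` then a rational value of
`sin θ` (resp. `cos θ`) must lie in `{0, ±1, ±1/2}`. -/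
theorem niven (θ : ℝ) (hθ : ∃ q : ℚ, θ = (q : ℝ) * (2 * Real.pi)) :
    ((∃ s : ℚ, Real.sin θ = (s : ℝ)) →
      Real.sin θ ∈ ({0, 1, -1, 1/2, -1/2} : Set ℝ)) ∧
    ((∃ c : ℚ, Real.cos θ = (c : ℝ)) →
      Real.cos θ ∈ ({0, 1, -1, 1/2, -1/2} : Set ℝ)) := by
  have hθπ : ∃ r : ℚ, θ = r * Real.pi := by
    obtain ⟨q, rfl⟩ := hθ
    exact ⟨2 * q, by push_cast; ring⟩
  have hvalues : ({-1, -1 / 2, 0, 1 / 2, 1} : Set ℝ) = {0, 1, -1, 1/2, -1/2} := by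
    ext x
    simp only [Set.mem_insert_iff, Set.mem_singleton_iff]
    tauto
  rw [← hvalues]
  exact ⟨_root_.niven_sin hθπ, _root_.niven hθπ⟩

end NivenTheorem
end

section
/- For all rationals z₁, z₂ (with the square roots interpreted in ℂ), the multisets {z₁, (−z₁−3+√(−3z₁²−6z₁−5))/2, (−z₁−3−√(−3z₁²−6z₁−5))/2} and {z₂, (−z₂−3+√(−3z₂²−6z₂−5))/2, (−z₂−3−√(−3z₂²−6z₂−5))/2} have equal power sums of orders 1 and 2; specifically, each multiset has power sum −3 of order 1 and 2 of order 2. -/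
/-!
With `w² = -3z² - 6z - 5`, the two conjugate elements `(-z - 3 ± w)/2` have sum `-z - 3` and
product `z² + 3z + 7/2`, so the triple consists of the roots of
`X³ + 3X² + (7/2)X - z(z² + 3z + 7/2)`. Its first two elementary symmetric functions do not
depend on `z`, hence neither do the power sums `p₁ = -3` and `p₂ = e₁² - 2e₂ = 9 - 7 = 2`.
-/

section BesselTriple

variable {K : Type*} [Field K] (h2 : (2 : K) ≠ 0) {z w : K}
include h2

lemma bessel_pair_add : (-z - 3 + w) / 2 + (-z - 3 - w) / 2 = -z - 3 := by
  field_simp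
  ring

lemma bessel_pair_mul (hw : w ^ 2 = -3 * z ^ 2 - 6 * z - 5) :
    (-z - 3 + w) / 2 * ((-z - 3 - w) / 2) = z ^ 2 + 3 * z + 7 / 2 := by
  field_simp
  linear_combination (-1 : K) * hw

lemma bessel_triple_powerSum_one : z + (-z - 3 + w) / 2 + (-z - 3 - w) / 2 = -3 := by
  rw [add_assoc, bessel_pair_add h2]
  ring

lemma bessel_triple_powerSum_two (hw : w ^ 2 = -3 * z ^ 2 - 6 * z - 5) :
    z ^ 2 + ((-z - 3 + w) / 2) ^ 2 + ((-z - 3 - w) / 2) ^ 2 = 2 := by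
  set a := (-z - 3 + w) / 2
  set b := (-z - 3 - w) / 2
  calc z ^ 2 + a ^ 2 + b ^ 2 = z ^ 2 + (a + b) ^ 2 - 2 * (a * b) := by ring
    _ = z ^ 2 + (-z - 3) ^ 2 - 2 * (z ^ 2 + 3 * z + 7 / 2) := by
      rw [bessel_pair_add h2, bessel_pair_mul h2 hw]
    _ = 2 := by field_simp; ring

end BesselTriple

/-- A parametric ideal solution of degree 2 of the PTE problem over imaginary
quadratic fields: for any rationals `z₁, z₂` and square roots `w₁, w₂` of
`−3zᵢ²−6zᵢ−5` in `ℂ`, the corresponding triples have equal power sums of orders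
1 and 2; specifically each has first power sum `−3` and second power sum `2`. -/
theorem bessel_pte_degree_two (z₁ z₂ : ℚ) (w₁ w₂ : ℂ)
    (hw₁ : w₁ ^ 2 = -3 * (z₁ : ℂ)^2 - 6 * (z₁ : ℂ) - 5)
    (hw₂ : w₂ ^ 2 = -3 * (z₂ : ℂ)^2 - 6 * (z₂ : ℂ) - 5) :
    ((z₁ : ℂ) + (-(z₁ : ℂ) - 3 + w₁)/2 + (-(z₁ : ℂ) - 3 - w₁)/2 = -3 ∧
     (z₁ : ℂ)^2 + ((-(z₁ : ℂ) - 3 + w₁)/2)^2 + ((-(z₁ : ℂ) - 3 - w₁)/2)^2 = 2) ∧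
    ((z₂ : ℂ) + (-(z₂ : ℂ) - 3 + w₂)/2 + (-(z₂ : ℂ) - 3 - w₂)/2 = -3 ∧
     (z₂ : ℂ)^2 + ((-(z₂ : ℂ) - 3 + w₂)/2)^2 + ((-(z₂ : ℂ) - 3 - w₂)/2)^2 = 2) ∧
    ((z₁ : ℂ) + (-(z₁ : ℂ) - 3 + w₁)/2 + (-(z₁ : ℂ) - 3 - w₁)/2 =
      (z₂ : ℂ) + (-(z₂ : ℂ) - 3 + w₂)/2 + (-(z₂ : ℂ) - 3 - w₂)/2) ∧
    ((z₁ : ℂ)^2 + ((-(z₁ : ℂ) - 3 + w₁)/2)^2 + ((-(z₁ : ℂ) - 3 - w₁)/2)^2 =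
      (z₂ : ℂ)^2 + ((-(z₂ : ℂ) - 3 + w₂)/2)^2 + ((-(z₂ : ℂ) - 3 - w₂)/2)^2) := by
  have h2 : (2 : ℂ) ≠ 0 := two_ne_zero
  have p₁₁ := bessel_triple_powerSum_one h2 (z := (z₁ : ℂ)) (w := w₁)
  have p₁₂ := bessel_triple_powerSum_one h2 (z := (z₂ : ℂ)) (w := w₂)
  have p₂₁ := bessel_triple_powerSum_two h2 hw₁
  have p₂₂ := bessel_triple_powerSum_two h2 hw₂
  exact ⟨⟨p₁₁, p₂₁⟩, ⟨p₁₂, p₂₂⟩, p₁₁.trans p₁₂.symm, p₂₁.trans p₂₂.symm⟩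
end
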